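/- Schur complement identity for Pfaffians: let M be a 2(j+k)×2(j+k) skew-symmetric matrix written in block form M = [[A, B],[−B^T, D]] where A is 2j×2j skew-symmetric and invertible and D is 2k×2k skew-symmetric. Then pf(M) = pf(A) · pf(D + B^T A^{-1} B). -/

import Mathlib

/-!
With `C = [[1, A⁻¹B], [0, 1]]`, skew-symmetry of `A⁻¹` gives the congruence
`[[A, B], [-Bᵀ, D]] = Cᵀ · diag(A, D + Bᵀ A⁻¹ B) · C` with `det C = 1`, so it suffices to know
`pf (Cᵀ M C) = det C · pf M` and `pf (diag(A, D)) = pf A · pf D` for the defining sum of the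
Pfaffian, for arbitrary square matrices.

For the first, expanding each entry of `Cᵀ M C` turns the sum over permutations `σ` into a sum
over all maps `φ` of the indices, weighted by `det (Cᵀ.submatrix id φ)`; this vanishes unless `φ`
is a permutation, and then equals `sign φ · det C`.

For the second, a term `σ` survives only if `σ` sends each pair of indices `{2i, 2i+1}` into one
block. Relabelling the pairs by `τ ∈ Perm (Fin (j+k))` does not change the term, and `σ ∘ τ` is
block diagonal for exactly `j! k!` of the `(j+k)!` relabellings `τ`; counting the pairs `(σ, τ)`
with `σ ∘ τ` block diagonal in both ways gives `j! k! · pf (diag(A, D)) = (j+k)! · pf A · pf D`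
up to the normalising constants.
-/

open Matrix BigOperators

noncomputable def pf {F : Type*} [Field F] [CharZero F] {n : ℕ}
    (A : Matrix (Fin (2 * n)) (Fin (2 * n)) F) : F :=
  (1 / ((2 : F) ^ n * (Nat.factorial n : F))) *
    ∑ σ : Equiv.Perm (Fin (2 * n)), ((Equiv.Perm.sign σ : ℤ) : F) *
      ∏ i : Fin n,
        A (σ ⟨2 * i.val, by have := i.isLt; omega⟩)
          (σ ⟨2 * i.val + 1, by have := i.isLt; omega⟩)

/-- Pfaffian on a sum index type, via reindexing to `Fin (2*(j+k))`. -/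
noncomputable def pfSum {F : Type*} [Field F] [CharZero F] {j k : ℕ}
    (M : Matrix (Fin (2 * j) ⊕ Fin (2 * k)) (Fin (2 * j) ⊕ Fin (2 * k)) F) : F :=
  pf (Matrix.reindex (finSumFinEquiv.trans (finCongr (by ring)))
        (finSumFinEquiv.trans (finCongr (by ring))) M :
      Matrix (Fin (2 * (j + k))) (Fin (2 * (j + k))) F)

open Equiv Equiv.Perm Finset

variable {R : Type*} [CommRing R]

section Pairing

variable {κ ι : Type*}

def pairValues (e : κ × Fin 2 ≃ ι) : (ι → ι) ≃ (κ → ι × ι) :=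
  (e.arrowCongr (Equiv.refl ι)).symm.trans
    ((Equiv.curry κ (Fin 2) ι).trans (Equiv.piCongrRight fun _ => finTwoArrowEquiv ι))

@[simp] theorem pairValues_apply (e : κ × Fin 2 ≃ ι) (φ : ι → ι) (c : κ) :
    pairValues e φ c = (φ (e (c, 0)), φ (e (c, 1))) := by
  simp [pairValues]

def pairPerm (e : κ × Fin 2 ≃ ι) (τ : Perm κ) : Perm ι :=
  e.permCongr (prodCongrLeft fun _ => τ)

@[simp] theorem pairPerm_apply (e : κ × Fin 2 ≃ ι) (τ : Perm κ) (c : κ) (r : Fin 2) :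
    pairPerm e τ (e (c, r)) = e (τ c, r) := by
  simp [pairPerm]

theorem pairPerm_mul (e : κ × Fin 2 ≃ ι) (τ τ' : Perm κ) :
    pairPerm e (τ * τ') = pairPerm e τ * pairPerm e τ' := by
  rw [pairPerm, pairPerm, pairPerm, ← permCongr_mul]
  rfl

theorem pairPerm_inv (e : κ × Fin 2 ≃ ι) (τ : Perm κ) : pairPerm e τ⁻¹ = (pairPerm e τ)⁻¹ := by
  rw [eq_inv_iff_mul_eq_one, ← pairPerm_mul, inv_mul_cancel]
  ext x
  obtain ⟨⟨c, r⟩, rfl⟩ := e.surjective x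
  simp

variable [Fintype κ] [Fintype ι] [DecidableEq ι]

def pfaffianTerm (e : κ × Fin 2 ≃ ι) (M : Matrix ι ι R) (σ : Perm ι) : R :=
  ((sign σ : ℤ) : R) * ∏ c, M (σ (e (c, 0))) (σ (e (c, 1)))

/-- `2ⁿ n!` times the Pfaffian of `M`, when `e` pairs up the indices as `e (c, 0), e (c, 1)`. -/
def pfaffianSum (e : κ × Fin 2 ≃ ι) (M : Matrix ι ι R) : R :=
  ∑ σ : Perm ι, pfaffianTerm e M σ

theorem pfaffianSum_reindex {κ' ι' : Type*} [Fintype κ'] [Fintype ι'] [DecidableEq ι']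
    (g : κ ≃ κ') (f : ι ≃ ι') (e : κ × Fin 2 ≃ ι) (e' : κ' × Fin 2 ≃ ι')
    (h : ∀ c r, f (e (c, r)) = e' (g c, r)) (M : Matrix ι ι R) :
    pfaffianSum e' (reindex f f M) = pfaffianSum e M := by
  have he : ∀ c r, f.symm (e' (g c, r)) = e (c, r) := fun c r => by rw [← h, symm_apply_apply]
  rw [pfaffianSum, ← Equiv.sum_comp f.permCongr]
  refine Finset.sum_congr rfl fun σ _ => ?_
  rw [pfaffianTerm, pfaffianTerm, sign_permCongr, ← Equiv.prod_comp g]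
  simp [he]

theorem sign_pairPerm [DecidableEq κ] (e : κ × Fin 2 ≃ ι) (τ : Perm κ) :
    sign (pairPerm e τ) = 1 := by
  rw [pairPerm, sign_permCongr, sign_prodCongrLeft, Fin.prod_univ_two, Int.units_mul_self]

theorem pfaffianTerm_mul_pairPerm [DecidableEq κ] (e : κ × Fin 2 ≃ ι) (M : Matrix ι ι R)
    (σ : Perm ι) (τ : Perm κ) : pfaffianTerm e M (σ * pairPerm e τ) = pfaffianTerm e M σ := by
  simp only [pfaffianTerm, Perm.sign_mul, sign_pairPerm, mul_one, Perm.mul_apply, pairPerm_apply]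
  rw [Equiv.prod_comp τ (fun c => M (σ (e (c, 0))) (σ (e (c, 1))))]

theorem prod_transpose_mul_mul_apply [DecidableEq κ] (e : κ × Fin 2 ≃ ι) (C M : Matrix ι ι R)
    (σ : ι → ι) :
    ∏ c, (Cᵀ * M * C) (σ (e (c, 0))) (σ (e (c, 1))) =
      ∑ φ : ι → ι, (∏ c, M (φ (e (c, 0))) (φ (e (c, 1)))) * ∏ x, C (φ x) (σ x) := by
  have hentry : ∀ a b, (Cᵀ * M * C) a b = ∑ p : ι × ι, C p.1 a * M p.1 p.2 * C p.2 b := by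
    intro a b
    simp only [Matrix.mul_apply, Matrix.transpose_apply, Finset.sum_mul, Fintype.sum_prod_type]
    exact Finset.sum_comm
  simp only [hentry, Fintype.prod_sum, ← (pairValues e).sum_comp, pairValues_apply]
  refine Finset.sum_congr rfl fun φ _ => ?_
  rw [← e.prod_comp, Fintype.prod_prod_type, ← Finset.prod_mul_distrib]
  refine Finset.prod_congr rfl fun c _ => ?_
  rw [Fin.prod_univ_two]
  ring

theorem pfaffianSum_transpose_mul_mul [DecidableEq κ] (e : κ × Fin 2 ≃ ι) (C M : Matrix ι ι R) :
    pfaffianSum e (Cᵀ * M * C) = C.det * pfaffianSum e M := by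
  have hdet : ∀ φ : ι → ι,
      ∑ σ : Perm ι, ((sign σ : ℤ) : R) * ∏ x, C (φ x) (σ x) = (Cᵀ.submatrix id φ).det := by
    intro φ
    simp [Matrix.det_apply']
  have hzero : ∀ φ : ι → ι, ¬ Function.Injective φ → (Cᵀ.submatrix id φ).det = 0 := by
    intro φ hφ
    obtain ⟨x, y, hxy, hne⟩ : ∃ x y, φ x = φ y ∧ x ≠ y := by
      simpa [Function.Injective] using hφ
    exact Matrix.det_zero_of_column_eq hne fun z => by simp [hxy]
  calc pfaffianSum e (Cᵀ * M * C)
      = ∑ φ : ι → ι, (∏ c, M (φ (e (c, 0))) (φ (e (c, 1)))) * (Cᵀ.submatrix id φ).det := by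
        simp only [pfaffianSum, pfaffianTerm, prod_transpose_mul_mul_apply, ← hdet,
          Finset.mul_sum]
        rw [Finset.sum_comm]
        exact Finset.sum_congr rfl fun φ _ => Finset.sum_congr rfl fun σ _ => by ring
    _ = ∑ τ : Perm ι, (∏ c, M (τ (e (c, 0))) (τ (e (c, 1)))) * (Cᵀ.submatrix id τ).det := by
        refine (Fintype.sum_of_injective _ DFunLike.coe_injective _ _ (fun φ hφ => ?_)
          fun _ => rfl).symm
        rw [hzero φ fun hinj => hφ ⟨Equiv.ofBijective φ hinj.bijective_of_finite, rfl⟩, mul_zero]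
    _ = C.det * pfaffianSum e M := by
        simp only [Matrix.det_permute', Matrix.det_transpose, pfaffianSum, pfaffianTerm,
          Finset.mul_sum]
        exact Finset.sum_congr rfl fun τ _ => by ring

end Pairing

theorem Equiv.Perm.mem_sumCongrHom_range_iff {α β : Type*} [Finite α] [Finite β]
    (σ : Perm (α ⊕ β)) : σ ∈ (sumCongrHom α β).range ↔ ∀ a, (σ (Sum.inl a)).isLeft := by
  constructor
  · rintro ⟨⟨σ₁, σ₂⟩, rfl⟩ a
    rfl
  · intro h
    refine mem_sumCongrHom_range_of_perm_mapsTo_inl ?_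
    rintro _ ⟨a, rfl⟩
    obtain ⟨b, hb⟩ := Sum.isLeft_iff.1 (h a)
    exact ⟨b, hb.symm⟩

section Blocks

variable {κ₁ κ₂ ι₁ ι₂ : Type*}

def sumPairing (e₁ : κ₁ × Fin 2 ≃ ι₁) (e₂ : κ₂ × Fin 2 ≃ ι₂) :
    (κ₁ ⊕ κ₂) × Fin 2 ≃ ι₁ ⊕ ι₂ :=
  (sumProdDistrib κ₁ κ₂ (Fin 2)).trans (e₁.sumCongr e₂)

@[simp] theorem sumPairing_inl (e₁ : κ₁ × Fin 2 ≃ ι₁) (e₂ : κ₂ × Fin 2 ≃ ι₂) (a : κ₁)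
    (r : Fin 2) : sumPairing e₁ e₂ (Sum.inl a, r) = Sum.inl (e₁ (a, r)) := rfl

@[simp] theorem sumPairing_inr (e₁ : κ₁ × Fin 2 ≃ ι₁) (e₂ : κ₂ × Fin 2 ≃ ι₂) (b : κ₂)
    (r : Fin 2) : sumPairing e₁ e₂ (Sum.inr b, r) = Sum.inr (e₂ (b, r)) := rfl

theorem isLeft_sumPairing (e₁ : κ₁ × Fin 2 ≃ ι₁) (e₂ : κ₂ × Fin 2 ≃ ι₂) (c : κ₁ ⊕ κ₂)
    (r : Fin 2) : (sumPairing e₁ e₂ (c, r)).isLeft = c.isLeft := by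
  cases c <;> rfl

theorem pairPerm_sumPairing_mem_range_iff [Finite κ₁] [Finite κ₂] [Finite ι₁] [Finite ι₂]
    (e₁ : κ₁ × Fin 2 ≃ ι₁) (e₂ : κ₂ × Fin 2 ≃ ι₂) (τ : Perm (κ₁ ⊕ κ₂)) :
    pairPerm (sumPairing e₁ e₂) τ ∈ (sumCongrHom ι₁ ι₂).range ↔
      τ ∈ (sumCongrHom κ₁ κ₂).range := by
  simp only [mem_sumCongrHom_range_iff]
  constructor
  · intro h a
    have := h (e₁ (a, 0))
    rwa [← sumPairing_inl e₁ e₂, pairPerm_apply, isLeft_sumPairing] at this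
  · intro h x
    obtain ⟨⟨a, r⟩, rfl⟩ := e₁.surjective x
    rw [← sumPairing_inl e₁ e₂, pairPerm_apply, isLeft_sumPairing]
    exact h a

variable [Fintype κ₁] [Fintype κ₂] [Fintype ι₁] [Fintype ι₂] [DecidableEq ι₁] [DecidableEq ι₂]

theorem pfaffianTerm_fromBlocks_sumCongr (e₁ : κ₁ × Fin 2 ≃ ι₁) (e₂ : κ₂ × Fin 2 ≃ ι₂)
    (A : Matrix ι₁ ι₁ R) (B : Matrix ι₁ ι₂ R) (C : Matrix ι₂ ι₁ R) (D : Matrix ι₂ ι₂ R)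
    (σ₁ : Perm ι₁) (σ₂ : Perm ι₂) :
    pfaffianTerm (sumPairing e₁ e₂) (fromBlocks A B C D) (Perm.sumCongr σ₁ σ₂) =
      pfaffianTerm e₁ A σ₁ * pfaffianTerm e₂ D σ₂ := by
  simp only [pfaffianTerm, sign_sumCongr, Fintype.prod_sum_type, sumPairing_inl, sumPairing_inr,
    Perm.sumCongr_apply, Sum.map_inl, Sum.map_inr, fromBlocks_apply₁₁, fromBlocks_apply₂₂]
  push_cast
  ring

theorem sum_pfaffianTerm_mem_sumCongrHom_range (e₁ : κ₁ × Fin 2 ≃ ι₁) (e₂ : κ₂ × Fin 2 ≃ ι₂)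
    (A : Matrix ι₁ ι₁ R) (B : Matrix ι₁ ι₂ R) (C : Matrix ι₂ ι₁ R) (D : Matrix ι₂ ι₂ R) :
    ∑ σ ∈ {σ | σ ∈ (sumCongrHom ι₁ ι₂).range},
        pfaffianTerm (sumPairing e₁ e₂) (fromBlocks A B C D) σ =
      pfaffianSum e₁ A * pfaffianSum e₂ D := by
  have hrange : ({σ | σ ∈ (sumCongrHom ι₁ ι₂).range} : Finset (Perm (ι₁ ⊕ ι₂))) =
      univ.map ⟨sumCongrHom ι₁ ι₂, sumCongrHom_injective⟩ := by
    ext σ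
    simp [MonoidHom.mem_range]
  rw [hrange, Finset.sum_map, Fintype.sum_prod_type, pfaffianSum, pfaffianSum, Finset.sum_mul_sum]
  simp [pfaffianTerm_fromBlocks_sumCongr]

theorem isLeft_eq_of_pfaffianTerm_ne_zero {e₁ : κ₁ × Fin 2 ≃ ι₁} {e₂ : κ₂ × Fin 2 ≃ ι₂}
    {A : Matrix ι₁ ι₁ R} {D : Matrix ι₂ ι₂ R} {σ : Perm (ι₁ ⊕ ι₂)}
    (h : pfaffianTerm (sumPairing e₁ e₂) (fromBlocks A 0 0 D) σ ≠ 0) (c : κ₁ ⊕ κ₂) (r : Fin 2) :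
    (σ (sumPairing e₁ e₂ (c, r))).isLeft = (σ (sumPairing e₁ e₂ (c, 0))).isLeft := by
  by_contra hne
  refine h ?_
  rw [pfaffianTerm, Finset.prod_eq_zero (mem_univ c), mul_zero]
  fin_cases r
  · exact absurd rfl hne
  · cases hx : σ (sumPairing e₁ e₂ (c, 0)) <;> cases hy : σ (sumPairing e₁ e₂ (c, 1)) <;>
      simp_all

theorem exists_mul_pairPerm_mem_sumCongrHom_range {e₁ : κ₁ × Fin 2 ≃ ι₁}
    {e₂ : κ₂ × Fin 2 ≃ ι₂} {A : Matrix ι₁ ι₁ R} {D : Matrix ι₂ ι₂ R} {σ : Perm (ι₁ ⊕ ι₂)}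
    (h : pfaffianTerm (sumPairing e₁ e₂) (fromBlocks A 0 0 D) σ ≠ 0) :
    ∃ τ, σ * pairPerm (sumPairing e₁ e₂) τ ∈ (sumCongrHom ι₁ ι₂).range := by
  set e := sumPairing e₁ e₂
  let S : κ₁ ⊕ κ₂ → Prop := fun c => (σ (e (c, 0))).isLeft
  -- `σ ∘ e` maps `S × Fin 2` onto the left block, as `e` does with `{c | c.isLeft} × Fin 2`.
  have hcard : Fintype.card {c : κ₁ ⊕ κ₂ // c.isLeft} = Fintype.card {c // S c} := by
    have h2 : Fintype.card ({c : κ₁ ⊕ κ₂ // c.isLeft} × Fin 2) =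
        Fintype.card ({c // S c} × Fin 2) :=
      calc _ = Fintype.card {p : (κ₁ ⊕ κ₂) × Fin 2 // p.1.isLeft} :=
            Fintype.card_congr prodSubtypeFstEquivSubtypeProd.symm
        _ = Fintype.card {x : ι₁ ⊕ ι₂ // x.isLeft} :=
            Fintype.card_congr (e.subtypeEquiv fun p => by rw [isLeft_sumPairing])
        _ = Fintype.card {p : (κ₁ ⊕ κ₂) × Fin 2 // S p.1} :=
            Fintype.card_congr ((e.trans σ).subtypeEquiv fun p => by
              rw [trans_apply, isLeft_eq_of_pfaffianTerm_ne_zero h]).symm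
        _ = _ := Fintype.card_congr prodSubtypeFstEquivSubtypeProd
    simpa only [Fintype.card_prod, Fintype.card_fin, Nat.mul_left_inj two_ne_zero] using h2
  let g : {c : κ₁ ⊕ κ₂ // c.isLeft} ≃ {c // S c} := Fintype.equivOfCardEq hcard
  refine ⟨g.extendSubtype, (mem_sumCongrHom_range_iff _).2 fun x => ?_⟩
  obtain ⟨⟨a, r⟩, rfl⟩ := e₁.surjective x
  rw [Perm.mul_apply, ← sumPairing_inl e₁ e₂, pairPerm_apply, isLeft_eq_of_pfaffianTerm_ne_zero h]
  exact g.extendSubtype_mem _ rfl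

theorem card_filter_mul_pairPerm_mem_sumCongrHom_range [DecidableEq κ₁] [DecidableEq κ₂]
    {e₁ : κ₁ × Fin 2 ≃ ι₁} {e₂ : κ₂ × Fin 2 ≃ ι₂}
    {A : Matrix ι₁ ι₁ R} {D : Matrix ι₂ ι₂ R} {σ : Perm (ι₁ ⊕ ι₂)}
    (h : pfaffianTerm (sumPairing e₁ e₂) (fromBlocks A 0 0 D) σ ≠ 0) :
    #{τ | σ * pairPerm (sumPairing e₁ e₂) τ ∈ (sumCongrHom ι₁ ι₂).range} =
      (Fintype.card κ₁).factorial * (Fintype.card κ₂).factorial := by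
  obtain ⟨τ₀, hτ₀⟩ := exists_mul_pairPerm_mem_sumCongrHom_range h
  have hmem : ∀ τ, σ * pairPerm (sumPairing e₁ e₂) τ ∈ (sumCongrHom ι₁ ι₂).range ↔
      τ₀⁻¹ * τ ∈ (sumCongrHom κ₁ κ₂).range := fun τ => by
    have hsplit : σ * pairPerm (sumPairing e₁ e₂) τ =
        σ * pairPerm (sumPairing e₁ e₂) τ₀ * pairPerm (sumPairing e₁ e₂) (τ₀⁻¹ * τ) := by
      rw [mul_assoc, ← pairPerm_mul, mul_inv_cancel_left]
    rw [hsplit, Subgroup.mul_mem_cancel_left _ hτ₀, pairPerm_sumPairing_mem_range_iff]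
  rw [Finset.filter_congr fun τ _ => hmem τ,
    Finset.card_equiv (Equiv.mulLeft τ₀⁻¹) (t := {τ | τ ∈ (sumCongrHom κ₁ κ₂).range}) (by simp),
    ← Fintype.card_subtype, sumCongrHom.card_range, Fintype.card_prod, Fintype.card_perm,
    Fintype.card_perm]

theorem factorial_mul_pfaffianSum_fromBlocks_zero [DecidableEq κ₁] [DecidableEq κ₂]
    (e₁ : κ₁ × Fin 2 ≃ ι₁) (e₂ : κ₂ × Fin 2 ≃ ι₂) (A : Matrix ι₁ ι₁ R) (D : Matrix ι₂ ι₂ R) :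
    ((Fintype.card κ₁).factorial * (Fintype.card κ₂).factorial : R) *
        pfaffianSum (sumPairing e₁ e₂) (fromBlocks A 0 0 D) =
      (Fintype.card (κ₁ ⊕ κ₂)).factorial * (pfaffianSum e₁ A * pfaffianSum e₂ D) := by
  set e := sumPairing e₁ e₂
  set F := pfaffianTerm e (fromBlocks A 0 0 D)
  set H := (sumCongrHom ι₁ ι₂).range
  -- `σ` is counted once for each relabelling `τ` of the pairs making `σ * pairPerm e τ` block
  -- diagonal.
  have hweight : ∀ σ, ((Fintype.card κ₁).factorial * (Fintype.card κ₂).factorial : R) * F σ =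
      ∑ τ : Perm (κ₁ ⊕ κ₂), if σ * pairPerm e τ ∈ H then F σ else 0 := by
    intro σ
    rw [← Finset.sum_filter, Finset.sum_const, nsmul_eq_mul]
    by_cases hσ : F σ = 0
    · simp [hσ]
    · rw [card_filter_mul_pairPerm_mem_sumCongrHom_range hσ]
      push_cast
      rfl
  have hshift : ∀ τ : Perm (κ₁ ⊕ κ₂),
      (∑ σ : Perm (ι₁ ⊕ ι₂), if σ * pairPerm e τ ∈ H then F σ else 0) =
        pfaffianSum e₁ A * pfaffianSum e₂ D := by
    intro τ
    rw [← Equiv.sum_comp (Equiv.mulRight (pairPerm e τ)⁻¹)]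
    simp only [coe_mulRight, inv_mul_cancel_right]
    simp only [← pairPerm_inv, F, pfaffianTerm_mul_pairPerm]
    rw [← Finset.sum_filter, sum_pfaffianTerm_mem_sumCongrHom_range]
  calc _ = ∑ σ, ∑ τ : Perm (κ₁ ⊕ κ₂), if σ * pairPerm e τ ∈ H then F σ else 0 := by
        rw [pfaffianSum, Finset.mul_sum]
        exact Finset.sum_congr rfl fun σ _ => hweight σ
    _ = _ := by
        rw [Finset.sum_comm, Finset.sum_congr rfl fun τ _ => hshift τ, Finset.sum_const,
          Finset.card_univ, Fintype.card_perm, nsmul_eq_mul]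

end Blocks

def finPairEquiv (n : ℕ) : Fin n × Fin 2 ≃ Fin (2 * n) :=
  finProdFinEquiv.trans (finCongr (Nat.mul_comm n 2))

@[simp] theorem finPairEquiv_apply_val {n : ℕ} (i : Fin n) (r : Fin 2) :
    (finPairEquiv n (i, r) : ℕ) = 2 * i + r := by
  simp [finPairEquiv]
  ring

section Pfaffian

variable {F : Type*} [Field F] [CharZero F] {j k : ℕ}

theorem pf_eq_pfaffianSum {n : ℕ} (M : Matrix (Fin (2 * n)) (Fin (2 * n)) F) :
    pf M = (1 / ((2 : F) ^ n * n.factorial)) * pfaffianSum (finPairEquiv n) M := by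
  have h0 : ∀ i : Fin n, finPairEquiv n (i, 0) = ⟨2 * i, by omega⟩ := fun i => Fin.ext (by simp)
  have h1 : ∀ i : Fin n, finPairEquiv n (i, 1) = ⟨2 * i + 1, by omega⟩ :=
    fun i => Fin.ext (by simp)
  simp only [pf, pfaffianSum, pfaffianTerm, h0, h1]

theorem pfSum_eq_pfaffianSum
    (M : Matrix (Fin (2 * j) ⊕ Fin (2 * k)) (Fin (2 * j) ⊕ Fin (2 * k)) F) :
    pfSum M = (1 / ((2 : F) ^ (j + k) * (j + k).factorial)) *
      pfaffianSum (sumPairing (finPairEquiv j) (finPairEquiv k)) M := by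
  rw [pfSum, pf_eq_pfaffianSum, pfaffianSum_reindex finSumFinEquiv _ _ _ fun c r => ?_]
  refine Fin.ext ?_
  rcases c with a | b
  · simp
  · simp
    ring

theorem pfSum_transpose_mul_mul
    (C M : Matrix (Fin (2 * j) ⊕ Fin (2 * k)) (Fin (2 * j) ⊕ Fin (2 * k)) F) :
    pfSum (Cᵀ * M * C) = C.det * pfSum M := by
  rw [pfSum_eq_pfaffianSum, pfSum_eq_pfaffianSum, pfaffianSum_transpose_mul_mul]
  ring

theorem pfSum_fromBlocks_zero (A : Matrix (Fin (2 * j)) (Fin (2 * j)) F)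
    (D : Matrix (Fin (2 * k)) (Fin (2 * k)) F) :
    pfSum (fromBlocks A 0 0 D) = pf A * pf D := by
  have h := factorial_mul_pfaffianSum_fromBlocks_zero (R := F) (finPairEquiv j) (finPairEquiv k) A D
  simp only [Fintype.card_fin, Fintype.card_sum] at h
  rw [pfSum_eq_pfaffianSum, pf_eq_pfaffianSum, pf_eq_pfaffianSum]
  have hj : (j.factorial : F) ≠ 0 := Nat.cast_ne_zero.2 j.factorial_ne_zero
  have hk : (k.factorial : F) ≠ 0 := Nat.cast_ne_zero.2 k.factorial_ne_zero
  have hjk : ((j + k).factorial : F) ≠ 0 := Nat.cast_ne_zero.2 (j + k).factorial_ne_zero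
  field_simp
  linear_combination (2 : F) ^ j * 2 ^ k * h

end Pfaffian

theorem fromBlocks_neg_transpose_eq_transpose_mul_mul {m n : Type*} [Fintype m] [Fintype n]
    [DecidableEq m] [DecidableEq n] (A : Matrix m m R) (B : Matrix m n R) (D : Matrix n n R) (hA : Aᵀ = -A) [Invertible A] :
    fromBlocks A B (-Bᵀ) D = (fromBlocks 1 (A⁻¹ * B) 0 1 : Matrix (m ⊕ n) (m ⊕ n) R)ᵀ *
      fromBlocks A 0 0 (D + Bᵀ * A⁻¹ * B) * fromBlocks 1 (A⁻¹ * B) 0 1 := by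
  have hskew : A⁻¹ᵀ = -A⁻¹ := by
    rw [transpose_nonsing_inv, hA]
    exact inv_eq_left_inv (by simp)
  rw [fromBlocks_eq_of_invertible₁₁, invOf_eq_nonsing_inv, fromBlocks_transpose, transpose_mul,
    hskew]
  simp [Matrix.neg_mul, Matrix.mul_neg, sub_eq_add_neg]

theorem pf_schur_complement_general {j k : ℕ}
    (A : Matrix (Fin (2 * j)) (Fin (2 * j)) ℂ)
    (D : Matrix (Fin (2 * k)) (Fin (2 * k)) ℂ)
    (B : Matrix (Fin (2 * j)) (Fin (2 * k)) ℂ)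
    (hA : Aᵀ = -A) (hAinv : Invertible A) :
    pfSum (Matrix.fromBlocks A B (-Bᵀ) D) = pf A * pf (D + Bᵀ * A⁻¹ * B) := by
  rw [fromBlocks_neg_transpose_eq_transpose_mul_mul A B D hA, pfSum_transpose_mul_mul,
    det_fromBlocks_zero₂₁, det_one, det_one, mul_one, one_mul, pfSum_fromBlocks_zero]

/-- Schur complement identity for Pfaffians:
`pf [[A, B],[−Bᵀ, D]] = pf(A) ⬝ pf(D + Bᵀ A⁻¹ B)`. -/
theorem pf_schur_complement {j k : ℕ}
    (A : Matrix (Fin (2 * j)) (Fin (2 * j)) ℂ)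
    (D : Matrix (Fin (2 * k)) (Fin (2 * k)) ℂ)
    (B : Matrix (Fin (2 * j)) (Fin (2 * k)) ℂ)
    (hA : Aᵀ = -A) (hD : Dᵀ = -D) (hAinv : Invertible A) :
    pfSum (Matrix.fromBlocks A B (-Bᵀ) D) = pf A * pf (D + Bᵀ * A⁻¹ * B) :=
  pf_schur_complement_general A D B hA hAinv
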